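/- arXiv:2404.04399 — 2 statements merged into one kernel-verified Lean document; each statement's English description precedes it below -/
import Mathlib

section
/- Let n ≥ 1 and τ ∈ ℕ. For each subject i ∈ Fin n and time t ∈ Fin τ, let w_{i,t} ≥ 0, v_{i,t} ∈ [0,1], q_{i,t} ∈ (0,1), and let u_i ∈ ℝ, with ψ̂ = (1/n)·Σ_i u_i. Define the empirical targeting loss F(ε) = (1/n)·Σ_i Σ_ت w_{i,t} · L(σ(logit q_{i,t} + ε), v_{i,t}). If ε* ∈ ℝ satisfies F′(ε*) = 0, then the empirical mean of the estimated efficient influence function vanishes: (1/n)·Σ_i [ (u_i − ψ̂) + Σ_t w_{i,t} · (v_{i,t} − σ(logit q_{i,t} + ε*)) ] = 0. -/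
open Real Finset

/-- The sigmoid function `σ(x) = eˣ / (1 + eˣ)`. -/
noncomputable def sigmoid (x : ℝ) : ℝ := Real.exp x / (1 + Real.exp x)

/-- The logit function `logit q = log (q / (1 - q))`. -/
noncomputable def logit (q : ℝ) : ℝ := Real.log (q / (1 - q))

/-- The binary cross-entropy loss `L(ŷ, y) = -(y log ŷ + (1-y) log (1-ŷ))`. -/
noncomputable def bce (yhat y : ℝ) : ℝ := -(y * Real.log yhat + (1 - y) * Real.log (1 - yhat))

lemma one_add_exp_pos (x : ℝ) : 0 < 1 + Real.exp x := by positivity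

lemma bce_sigmoid (x y : ℝ) : bce (_root_.sigmoid x) y = Real.log (1 + Real.exp x) - y * x := by
  have h1 : (0:ℝ) < 1 + Real.exp x := one_add_exp_pos x
  have hlog1 : Real.log (_root_.sigmoid x) = x - Real.log (1 + Real.exp x) := by
    unfold _root_.sigmoid
    rw [Real.log_div (Real.exp_pos x).ne' h1.ne', Real.log_exp]
  have hsub : 1 - _root_.sigmoid x = 1 / (1 + Real.exp x) := by
    unfold _root_.sigmoid; field_simp; ring
  have hlog2 : Real.log (1 - _root_.sigmoid x) = -Real.log (1 + Real.exp x) := by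
    rw [hsub, Real.log_div one_ne_zero h1.ne', Real.log_one]; ring
  unfold bce
  rw [hlog1, hlog2]; ring

lemma hasDerivAt_bce_sigmoid (a y εs : ℝ) :
    HasDerivAt (fun ε => bce (_root_.sigmoid (a + ε)) y) (_root_.sigmoid (a + εs) - y) εs := by
  have h1 : HasDerivAt (fun ε : ℝ => a + ε) 1 εs := (hasDerivAt_id εs).const_add a
  have h2 : HasDerivAt (fun ε : ℝ => Real.exp (a + ε)) (Real.exp (a + εs)) εs := by
    simpa using h1.exp
  have h3 : HasDerivAt (fun ε : ℝ => 1 + Real.exp (a + ε)) (Real.exp (a + εs)) εs :=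
    h2.const_add 1
  have h4 := h3.log (one_add_exp_pos (a + εs)).ne'
  have h5 : HasDerivAt (fun ε : ℝ => y * (a + ε)) y εs := by
    simpa using h1.const_mul y
  have h6 := h4.sub h5
  have heq : (fun ε : ℝ => Real.log (1 + Real.exp (a + ε)) - y * (a + ε)) =
      (fun ε => bce (_root_.sigmoid (a + ε)) y) := by
    funext ε; rw [bce_sigmoid]
  rw [← heq]
  exact h6

/-- If `ε*` is a critical point of the empirical targeting loss
`F(ε) = (1/n) Σ_i Σ_t w_{i,t} L(σ(logit q_{i,t} + ε), v_{i,t})`, then the empirical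
mean of the estimated efficient influence function vanishes. -/
theorem stmt_2 (n : ℕ) (hn : 1 ≤ n) (τ : ℕ)
    (w v q : Fin n → Fin τ → ℝ) (u : Fin n → ℝ)
    (hw : ∀ i t, 0 ≤ w i t) (hv : ∀ i t, v i t ∈ Set.Icc (0 : ℝ) 1)
    (hq : ∀ i t, q i t ∈ Set.Ioo (0 : ℝ) 1)
    (ψ : ℝ) (hψ : ψ = (1 / (n : ℝ)) * ∑ i : Fin n, u i)
    (εs : ℝ)
    (hcrit : deriv (fun ε : ℝ =>
        (1 / (n : ℝ)) * ∑ i : Fin n, ∑ t : Fin τ,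
          w i t * bce (_root_.sigmoid (logit (q i t) + ε)) (v i t)) εs = 0) :
    (1 / (n : ℝ)) * ∑ i : Fin n,
        ((u i - ψ) + ∑ t : Fin τ, w i t * (v i t - _root_.sigmoid (logit (q i t) + εs))) = 0 := by
  have hnpos : (0:ℝ) < n := by exact_mod_cast Nat.lt_of_lt_of_le Nat.zero_lt_one hn
  have hD : HasDerivAt (fun ε : ℝ =>
      (1 / (n : ℝ)) * ∑ i : Fin n, ∑ t : Fin τ,
        w i t * bce (_root_.sigmoid (logit (q i t) + ε)) (v i t))
      ((1 / (n : ℝ)) * ∑ i : Fin n, ∑ t : Fin τ,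
        w i t * (_root_.sigmoid (logit (q i t) + εs) - v i t)) εs := by
    apply HasDerivAt.const_mul
    apply HasDerivAt.fun_sum
    intro i _
    apply HasDerivAt.fun_sum
    intro t _
    exact (hasDerivAt_bce_sigmoid (logit (q i t)) (v i t) εs).const_mul (w i t)
  have hzero : (1 / (n : ℝ)) * ∑ i : Fin n, ∑ t : Fin τ,
      w i t * (_root_.sigmoid (logit (q i t) + εs) - v i t) = 0 := by
    rw [← hD.deriv]; exact hcrit
  have hzero' : ∑ i : Fin n, ∑ t : Fin τ,
      w i t * (_root_.sigmoid (logit (q i t) + εs) - v i t) = 0 := by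
    have := hzero
    field_simp at this
    simpa using this
  have hu : ∑ i : Fin n, (u i - ψ) = 0 := by
    rw [Finset.sum_sub_distrib, Finset.sum_const, Finset.card_fin, hψ]
    rw [nsmul_eq_mul, ← mul_assoc, mul_one_div_cancel hnpos.ne', one_mul, sub_self]
  rw [Finset.sum_add_distrib, hu, zero_add]
  have hflip : ∑ i : Fin n, ∑ t : Fin τ, w i t * (v i t - _root_.sigmoid (logit (q i t) + εs))
      = -∑ i : Fin n, ∑ t : Fin τ, w i t * (_root_.sigmoid (logit (q i t) + εs) - v i t) := by
    rw [← Finset.sum_neg_distrib]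
    refine Finset.sum_congr rfl fun i _ => ?_
    rw [← Finset.sum_neg_distrib]
    exact Finset.sum_congr rfl fun t _ => by ring
  rw [hflip, hzero']
  simp
end

section
/- Let (Ω, m, μ) be a probability space, τ ≥ 1, and let 𝒢₀ ≤ 𝒢₁ ≤ ⋯ ≤ 𝒢_{τ−1} ≤ m be a monotone family of sub-σ-algebras. Let Y : Ω → ℝ be integrable. Suppose (Qᵏ)_{k∈ℕ}, with Qᵏ : Fin τ → (Ω → ℝ), satisfies for every k: Qᵏ⁺¹_{τ−1} = μ[Y | 𝒢_{τ−1}] μ-a.e., and for every t < τ−1, Qᵏ⁺¹_t = μ[Qᵏ_{t+1} | 𝒢_t] μ-a.e. Then for every t ∈ Fin τ and every k ≥ τ − t, one has Qᵏ_t = μ[Y | 𝒢_t] μ-a.e. In particular, after τ iterations the whole family has converged to the true conditional mean outcomes: Q^τ_t = μ[Y | 𝒢_t] μ-a.e. for all t. -/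
open MeasureTheory

/-- Finite-step convergence of the temporal-difference learning iteration: if each
iterate satisfies `Q^{k+1}_{τ-1} = μ[Y | 𝒢_{τ-1}]` a.e. and
`Q^{k+1}_t = μ[Q^k_{t+1} | 𝒢_t]` a.e. for `t < τ-1`, then `Q^k_t = μ[Y | 𝒢_t]` a.e.
whenever `k ≥ τ - t`; in particular `Q^τ_t = μ[Y | 𝒢_t]` a.e. for all `t`. -/
theorem stmt_7 {Ω : Type*} {m : MeasurableSpace Ω} (μ : Measure Ω) [IsProbabilityMeasure μ]
    (τ : ℕ) (hτ : 1 ≤ τ)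
    (𝒢 : Fin τ → MeasurableSpace Ω) (hmono : Monotone 𝒢) (hle : ∀ t, 𝒢 t ≤ m)
    (Y : Ω → ℝ) (hY : Integrable Y μ)
    (Q : ℕ → Fin τ → Ω → ℝ)
    (hlast : ∀ k : ℕ,
      Q (k + 1) ⟨τ - 1, by omega⟩ =ᵐ[μ] μ[Y | 𝒢 ⟨τ - 1, by omega⟩])
    (hstep : ∀ k : ℕ, ∀ t : Fin τ, (h : (t : ℕ) + 1 < τ) →
      Q (k + 1) t =ᵐ[μ] μ[Q k ⟨(t : ℕ) + 1, h⟩ | 𝒢 t]) :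
    (∀ t : Fin τ, ∀ k : ℕ, τ - (t : ℕ) ≤ k → Q k t =ᵐ[μ] μ[Y | 𝒢 t]) ∧
    (∀ t : Fin τ, Q τ t =ᵐ[μ] μ[Y | 𝒢 t]) := by
  have main : ∀ d : ℕ, ∀ t : Fin τ, (t : ℕ) + d + 1 = τ →
      ∀ k : ℕ, d + 1 ≤ k → Q k t =ᵐ[μ] μ[Y | 𝒢 t] := by
    intro d
    induction d with
    | zero =>
      intro t ht k hk
      obtain ⟨j, rfl⟩ : ∃ j, k = j + 1 := ⟨k - 1, by omega⟩
      have : t = ⟨τ - 1, by omega⟩ := Fin.ext (by simp; omega)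
      rw [this]
      exact hlast j
    | succ d ih =>
      intro t ht k hk
      obtain ⟨j, rfl⟩ : ∃ j, k = j + 1 := ⟨k - 1, by omega⟩
      have hlt : (t : ℕ) + 1 < τ := by omega
      set t' : Fin τ := ⟨(t : ℕ) + 1, hlt⟩
      have h1 : Q j t' =ᵐ[μ] μ[Y | 𝒢 t'] := ih t' (by simp [t']; omega) j (by omega)
      calc Q (j + 1) t =ᵐ[μ] μ[Q j t' | 𝒢 t] := hstep j t hlt
        _ =ᵐ[μ] μ[(μ[Y | 𝒢 t']) | 𝒢 t] := condExp_congr_ae h1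
        _ =ᵐ[μ] μ[Y | 𝒢 t] := condExp_condExp_of_le (hmono (by simp [t', Fin.le_def])) (hle t')
  have key : ∀ t : Fin τ, ∀ k : ℕ, τ - (t : ℕ) ≤ k → Q k t =ᵐ[μ] μ[Y | 𝒢 t] := by
    intro t k hk
    exact main (τ - 1 - (t : ℕ)) t (by omega) k (by omega)
  exact ⟨key, fun t => key t τ (by omega)⟩
end
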